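/- arXiv:1409.3948 — 2 statements merged into one kernel-verified Lean document; each statement's English description precedes it below -/
import Mathlib

section
/- For every integer m ≥ 1, the number of positive rationals of length exactly m is 2^{m−1}. -/
namespace ResolutionGraph

/-- The value of the continued fraction `[a₁, …, aₙ] = a₁ + 1/[a₂, …, aₙ]`. -/
def cfVal : List ℕ → ℚ
  | [] => 0
  | [a] => (a : ℚ)
  | a :: b :: rest => (a : ℚ) + 1 / cfVal (b :: rest)

/-- `L = (a₁, …, aₙ)` is a continued fraction expansion of `q`:
`n ≥ 1`, `a₁ ≥ 0`, `a₂, …, aₙ ≥ 1` and `[a₁, …, aₙ] = q`. -/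
def IsExpansion (L : List ℕ) (q : ℚ) : Prop :=
  L ≠ [] ∧ (∀ x ∈ L.tail, 1 ≤ x) ∧ cfVal L = q

/-- `q` has length `m`, i.e. some expansion `(a₁, …, aₙ)` of `q` satisfies `a₁ + ⋯ + aₙ = m`. -/
def HasLen (q : ℚ) (m : ℕ) : Prop :=
  ∃ L : List ℕ, IsExpansion L q ∧ L.sum = m

/-- `α ∼ β` : one of them has an expansion `[a₁, …, a_k]` and the other equals
`[a₁, …, a_k, n]` for some integer `n ≥ 1`. -/
def Related (α β : ℚ) : Prop :=
  (∃ (L : List ℕ) (n : ℕ), 1 ≤ n ∧ IsExpansion L α ∧ cfVal (L ++ [n]) = β) ∨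
  (∃ (L : List ℕ) (n : ℕ), 1 ≤ n ∧ IsExpansion L β ∧ cfVal (L ++ [n]) = α)

/-- `γ` is the value of the convolution `α ∗ β`, computed from a witness of `α ∼ β`:
for an expansion `[a₁, …, a_k]` of one of them with the other equal to `[a₁, …, a_k, n]`
(`n ≥ 1` an integer), `γ = [a₁, …, a_k, n + 1]`. -/
def ConvWitness (α β γ : ℚ) : Prop :=
  ∃ (L : List ℕ) (n : ℕ), 1 ≤ n ∧
    ((IsExpansion L α ∧ cfVal (L ++ [n]) = β) ∨ (IsExpansion L β ∧ cfVal (L ++ [n]) = α)) ∧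
    cfVal (L ++ [n + 1]) = γ

/-- `α ≺ β` : `β` has an expansion `[a₁, …, a_k]` and `α = [a₁, …, a_ℓ, b]` for some
`0 ≤ ℓ ≤ k − 1` and `1 ≤ b ≤ a_{ℓ+1}`. -/
def Precedes (α β : ℚ) : Prop :=
  ∃ L : List ℕ, IsExpansion L β ∧ ∃ ℓ : ℕ, ∃ h : ℓ < L.length, ∃ b : ℕ,
    1 ≤ b ∧ b ≤ L.get ⟨ℓ, h⟩ ∧ cfVal (L.take ℓ ++ [b]) = α

/-- `α` immediately precedes `β` : `α ≺ β` and `|β| = |α| + 1`. -/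
def ImmediatelyPrecedes (α β : ℚ) : Prop :=
  Precedes α β ∧ ∃ a : ℕ, HasLen α a ∧ HasLen β (a + 1)

section Aux

lemma one_le_cfVal (L : List ℕ) (h : L ≠ []) (h1 : ∀ x ∈ L, 1 ≤ x) : 1 ≤ cfVal L := by
  induction L with
  | nil => exact absurd rfl h
  | cons a T ih =>
    cases T with
    | nil =>
      have ha : 1 ≤ a := h1 a (by simp)
      show (1:ℚ) ≤ (a:ℚ)
      exact_mod_cast ha
    | cons b R =>
      have h2 : 1 ≤ cfVal (b :: R) :=
        ih (by simp) (fun x hx => h1 x (List.mem_cons_of_mem a hx))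
      have hpos : (0:ℚ) < 1 / cfVal (b :: R) :=
        one_div_pos.2 (lt_of_lt_of_le zero_lt_one h2)
      have ha : (1:ℚ) ≤ (a:ℚ) := by exact_mod_cast h1 a (by simp)
      show (1:ℚ) ≤ (a:ℚ) + 1 / cfVal (b :: R)
      linarith

lemma cfVal_succ_head (a : ℕ) (T : List ℕ) :
    cfVal ((a + 1) :: T) = cfVal (a :: T) + 1 := by
  cases T with
  | nil => show ((a+1 : ℕ) : ℚ) = (a : ℚ) + 1; push_cast; ring
  | cons b R =>
    show ((a+1 : ℕ) : ℚ) + 1 / cfVal (b :: R) = (a : ℚ) + 1 / cfVal (b :: R) + 1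
    push_cast; ring

lemma setOne : {α : ℚ | 0 < α ∧ HasLen α 1} = {1} := by
  ext α
  simp only [Set.mem_setOf_eq, Set.mem_singleton_iff]
  constructor
  · rintro ⟨hα, L, ⟨hne, htail, hval⟩, hsum⟩
    match L, hne with
    | [a], _ =>
      have ha : a = 1 := by simpa using hsum
      have : cfVal [a] = (a : ℚ) := rfl
      rw [this, ha] at hval
      simpa using hval.symm
    | a :: b :: R, _ =>
      have hb : 1 ≤ b := htail b (by simp)
      have hsum' : a + (b + R.sum) = 1 := by simpa using hsum
      have ha : a = 0 := by omega
      have hb1 : b = 1 := by omega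
      have hR : R.sum = 0 := by omega
      have hRnil : R = [] := by
        cases R with
        | nil => rfl
        | cons c R' =>
          have hc : 1 ≤ c := htail c (by simp)
          simp [List.sum_cons] at hR
          omega
      subst ha hb1 hRnil
      have : cfVal [0, 1] = 1 := by
        show (0:ℚ) + 1 / cfVal [1] = 1
        show (0:ℚ) + 1 / ((1:ℕ):ℚ) = 1
        norm_num
      rw [this] at hval
      exact hval.symm
  · rintro rfl
    refine ⟨one_pos, [1], ⟨by simp, by simp, ?_⟩, by simp⟩
    show ((1:ℕ):ℚ) = 1
    norm_num

lemma setStep (m : ℕ) (hm : 1 ≤ m) :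
    {α : ℚ | 0 < α ∧ HasLen α (m + 1)} =
      (fun β : ℚ => β + 1) '' {α : ℚ | 0 < α ∧ HasLen α m} ∪
      (fun β : ℚ => 1 / (β + 1)) '' {α : ℚ | 0 < α ∧ HasLen α m} := by
  ext α
  simp only [Set.mem_setOf_eq, Set.mem_union, Set.mem_image]
  constructor
  · rintro ⟨hα, L, ⟨hne, htail, hval⟩, hsum⟩
    match L, hne with
    | [a], _ =>
      -- α = a = m + 1 ≥ 2
      have ha : a = m + 1 := by simpa using hsum
      have hva : (a : ℚ) = α := hval
      left
      refine ⟨α - 1, ⟨?_, [a - 1], ⟨by simp, by simp, ?_⟩, ?_⟩, by ring⟩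
      · have : (2:ℚ) ≤ α := by rw [← hva, ha]; exact_mod_cast by omega
        linarith
      · show ((a - 1 : ℕ) : ℚ) = α - 1
        rw [← hva]
        have : 1 ≤ a := by omega
        push_cast [this]
        ring
      · simp; omega
    | a :: b :: R, _ =>
      have hb : 1 ≤ b := htail b (by simp)
      have hR1 : ∀ x ∈ R, 1 ≤ x := fun x hx => htail x (by simp [hx])
      have hT1 : 1 ≤ cfVal (b :: R) := one_le_cfVal _ (by simp) htail
      have hTpos : (0:ℚ) < cfVal (b :: R) := lt_of_lt_of_le zero_lt_one hT1
      have hTinv : (0:ℚ) < 1 / cfVal (b :: R) := one_div_pos.2 hTpos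
      have hvc : (a : ℚ) + 1 / cfVal (b :: R) = α := hval
      rcases Nat.eq_zero_or_pos a with ha0 | ha1
      · -- a = 0 : α = 1/cfVal (b::R), use second image
        subst ha0
        right
        have key : cfVal ((b - 1) :: R) = cfVal (b :: R) - 1 := by
          have := cfVal_succ_head (b - 1) R
          rw [show b - 1 + 1 = b from by omega] at this
          linarith
        have hgt1 : (1:ℚ) < cfVal (b :: R) := by
          cases R with
          | nil =>
            show (1:ℚ) < (b:ℚ)
            have : b = m + 1 := by simpa using hsum
            exact_mod_cast by omega
          | cons c R' =>
            have h1 : 1 ≤ cfVal (c :: R') := one_le_cfVal _ (by simp) hR1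
            have : (0:ℚ) < 1 / cfVal (c :: R') :=
              one_div_pos.2 (lt_of_lt_of_le zero_lt_one h1)
            have hbq : (1:ℚ) ≤ (b:ℚ) := by exact_mod_cast hb
            show (1:ℚ) < (b:ℚ) + 1 / cfVal (c :: R')
            linarith
        refine ⟨cfVal (b :: R) - 1, ⟨by linarith, [b - 1] ++ R, ⟨by simp, ?_, ?_⟩, ?_⟩, ?_⟩
        · intro x hx
          exact hR1 x (by simpa using hx)
        · show cfVal ((b - 1) :: R) = _
          exact key
        · have : (0:ℕ) + (b + R.sum) = m + 1 := by simpa using hsum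
          simp only [List.singleton_append, List.sum_cons]
          omega
        · rw [sub_add_cancel, ← hvc]
          push_cast
          ring
      · -- a ≥ 1 : α > 1, use first image
        left
        have key : cfVal ((a - 1) :: b :: R) = cfVal (a :: b :: R) - 1 := by
          have := cfVal_succ_head (a - 1) (b :: R)
          rw [show a - 1 + 1 = a from by omega] at this
          linarith
        have haq : (1:ℚ) ≤ (a:ℚ) := by exact_mod_cast ha1
        refine ⟨α - 1, ⟨by linarith, (a - 1) :: b :: R, ⟨by simp, htail, ?_⟩, ?_⟩, by ring⟩
        · rw [key]
          show (a:ℚ) + 1 / cfVal (b :: R) - 1 = α - 1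
          linarith
        · have : a + (b + R.sum) = m + 1 := by simpa using hsum
          simp only [List.sum_cons]
          omega
  · rintro (⟨β, ⟨hβ, L, ⟨hne, htail, hval⟩, hsum⟩, rfl⟩ |
            ⟨β, ⟨hβ, L, ⟨hne, htail, hval⟩, hsum⟩, rfl⟩)
    · -- α = β + 1
      match L, hne with
      | a :: T, _ =>
        refine ⟨by linarith, (a + 1) :: T, ⟨by simp, htail, ?_⟩, ?_⟩
        · rw [cfVal_succ_head]
          show cfVal (a :: T) + 1 = β + 1
          rw [hval]
        · simp only [List.sum_cons] at hsum ⊢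
          omega
    · -- α = 1 / (β + 1)
      match L, hne with
      | a :: T, _ =>
        have hcf : cfVal ((a + 1) :: T) = β + 1 := by
          rw [cfVal_succ_head]
          show cfVal (a :: T) + 1 = β + 1
          rw [hval]
        refine ⟨one_div_pos.2 (by linarith), 0 :: (a + 1) :: T, ⟨by simp, ?_, ?_⟩, ?_⟩
        · intro x hx
          simp only [List.tail_cons, List.mem_cons] at hx
          rcases hx with rfl | hx
          · omega
          · exact htail x hx
        · show ((0:ℕ):ℚ) + 1 / cfVal ((a + 1) :: T) = 1 / (β + 1)
          rw [hcf]
          norm_num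
        · simp only [List.sum_cons] at hsum ⊢
          omega

end Aux

lemma setFinite : ∀ m : ℕ, 1 ≤ m → {α : ℚ | 0 < α ∧ HasLen α m}.Finite := by
  intro m hm
  induction m, hm using Nat.le_induction with
  | base => rw [setOne]; exact Set.finite_singleton 1
  | succ m hm ih =>
    rw [setStep m hm]
    exact (ih.image _).union (ih.image _)

theorem card_positive_rationals_of_length (m : ℕ) (hm : 1 ≤ m) :
    {α : ℚ | 0 < α ∧ HasLen α m}.ncard = 2 ^ (m - 1) := by
  induction m, hm using Nat.le_induction with
  | base => rw [setOne]; simp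
  | succ m hm ih =>
    have hfin := setFinite m hm
    rw [setStep m hm]
    have hdisj : Disjoint ((fun β : ℚ => β + 1) '' {α : ℚ | 0 < α ∧ HasLen α m})
        ((fun β : ℚ => 1 / (β + 1)) '' {α : ℚ | 0 < α ∧ HasLen α m}) := by
      rw [Set.disjoint_left]
      rintro α ⟨β, hβ, rfl⟩ ⟨γ, hγ, h⟩
      have hβ0 : (0:ℚ) < β := hβ.1
      have hγ0 : (0:ℚ) < γ := hγ.1
      have h1 : 1 / (γ + 1) < 1 := by
        rw [div_lt_one (by linarith)]; linarith
      simp only at h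
      rw [h] at h1
      linarith
    rw [Set.ncard_union_eq hdisj (hfin.image _) (hfin.image _)]
    have h1 : ((fun β : ℚ => β + 1) '' {α : ℚ | 0 < α ∧ HasLen α m}).ncard =
        {α : ℚ | 0 < α ∧ HasLen α m}.ncard :=
      Set.ncard_image_of_injective _ (add_left_injective 1)
    have h2 : ((fun β : ℚ => 1 / (β + 1)) '' {α : ℚ | 0 < α ∧ HasLen α m}).ncard =
        {α : ℚ | 0 < α ∧ HasLen α m}.ncard := by
      refine Set.ncard_image_of_injOn ?_
      intro x hx y hy h
      have hx0 : (0:ℚ) < x := hx.1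
      have hy0 : (0:ℚ) < y := hy.1
      simp only at h
      have hxe : x + 1 ≠ 0 := by linarith
      have hye : y + 1 ≠ 0 := by linarith
      field_simp at h
      linarith
    rw [h1, h2, ih]
    have hm1 : m - 1 + 1 = m := by omega
    calc 2 ^ (m - 1) + 2 ^ (m - 1) = 2 ^ (m - 1) * 2 := by ring
      _ = 2 ^ (m - 1 + 1) := (pow_succ 2 (m - 1)).symm
      _ = 2 ^ (m + 1 - 1) := by rw [hm1, Nat.add_sub_cancel]


end ResolutionGraph
end

section
/- For every integer m ≥ 1, let S_m = {0} ∪ {α ∈ ℚ_{>0} : |α| ≤ m}. Then S_m has exactly 2^m elements, and if α_0 < α_1 < ⋯ < α_{2^m−1} is its increasing enumeration, then for each index i one has |α_i| = m if and only if i is odd (and |α_i| < m if i is even). -/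
namespace ResolutionGraph

def lenAux : ℕ → ℕ → ℕ
  | p, s =>
    if p = 0 ∨ s = 0 then 0
    else if s ≤ p then lenAux (p - s) s + 1 else lenAux (s - p) p + 1
termination_by p s => p + s
decreasing_by all_goals omega

lemma lenAux_eq (p s : ℕ) : lenAux p s =
    if p = 0 ∨ s = 0 then 0
    else if s ≤ p then lenAux (p - s) s + 1 else lenAux (s - p) p + 1 := by
  rw [lenAux]

lemma lenAux_symm (p s : ℕ) : lenAux p s = lenAux s p := by
  rw [lenAux_eq p s, lenAux_eq s p]
  split_ifs <;>
    first
      | rfl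
      | (exfalso; omega)
      | (have hps : p = s := by omega
         subst hps; rfl)

lemma lenAux_mul (k : ℕ) (hk : k ≠ 0) : ∀ p s, lenAux (p * k) (s * k) = lenAux p s
  | p, s => by
    rw [lenAux_eq (p * k) (s * k), lenAux_eq p s]
    by_cases hp : p = 0
    · simp [hp]
    by_cases hs : s = 0
    · simp [hs]
    have hiff : s * k ≤ p * k ↔ s ≤ p :=
      ⟨fun hh => Nat.le_of_mul_le_mul_right hh (Nat.pos_of_ne_zero hk),
       fun hh => Nat.mul_le_mul_right k hh⟩
    split_ifs with h1 h2 h3 h4 h5 h6 <;>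
      first
        | rfl
        | (exfalso; revert hiff; simp [Nat.mul_eq_zero, hk] at *; omega)
        | (rw [← Nat.sub_mul, lenAux_mul k hk])
termination_by p s => p + s
decreasing_by all_goals omega

lemma lenAux_nat : ∀ n : ℕ, lenAux n 1 = n
  | 0 => by rw [lenAux_eq]; simp
  | n + 1 => by
    rw [lenAux_eq, if_neg (by omega), if_pos (by omega)]
    simpa using lenAux_nat n

lemma lenAux_pos {p s : ℕ} (hp : p ≠ 0) (hs : s ≠ 0) : 1 ≤ lenAux p s := by
  rw [lenAux_eq, if_neg (by simp [hp, hs])]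
  split <;> omega

/-- The length of a nonnegative rational. -/
def Len (q : ℚ) : ℕ := lenAux q.num.natAbs q.den

lemma Len_div (p s : ℕ) (hs : s ≠ 0) : Len ((p : ℚ) / (s : ℚ)) = lenAux p s := by
  suffices h : ∀ q : ℚ, q = (p : ℚ) / (s : ℚ) → Len q = lenAux p s from h _ rfl
  intro q hq
  have hs' : (s : ℚ) ≠ 0 := by exact_mod_cast hs
  have hq0 : 0 ≤ q := hq ▸ div_nonneg (by positivity) (by positivity)
  have hnum : 0 ≤ q.num := Rat.num_nonneg.mpr hq0
  have hd : (q.den : ℚ) ≠ 0 := by exact_mod_cast q.den_nz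
  have hqs : q * s = p := by rw [hq]; field_simp
  have h2 : (q.num : ℚ) = q * q.den := (div_eq_iff hd).mp (Rat.num_div_den q)
  have h1 : (q.num : ℚ) * s = (p : ℚ) * q.den := by
    linear_combination (s : ℚ) * h2 + (q.den : ℚ) * hqs
  have hna : ((q.num.natAbs : ℕ) : ℚ) = (q.num : ℚ) := by
    rw [Nat.cast_natAbs, abs_of_nonneg hnum]
  have hN : q.num.natAbs * s = p * q.den := by
    have : ((q.num.natAbs : ℕ) : ℚ) * s = (p : ℚ) * q.den := by rw [hna]; exact h1
    exact_mod_cast this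
  set n := q.num.natAbs with hn
  set d := q.den with hdd
  have hcop : Nat.Coprime n d := q.reduced
  have hdvd : d ∣ s := by
    have h3 : d ∣ n * s := ⟨p, by rw [hN, Nat.mul_comm]⟩
    exact (Nat.Coprime.symm hcop).dvd_of_dvd_mul_left h3
  obtain ⟨k, hk⟩ := hdvd
  have hk0 : k ≠ 0 := by rintro rfl; simp at hk; exact hs hk
  have hd0 : d ≠ 0 := q.den_nz
  have hp : p = n * k := by
    have h4 : n * (d * k) = p * d := by rw [← hk]; exact hN
    have h5 : (n * k) * d = p * d := by rw [← h4]; ring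
    exact (Nat.eq_of_mul_eq_mul_right (Nat.pos_of_ne_zero hd0) h5).symm
  rw [hp, hk]
  exact (lenAux_mul k hk0 n d).symm

lemma Len_nat (a : ℕ) : Len (a : ℚ) = a := by
  have := Len_div a 1 one_ne_zero
  simpa [lenAux_nat] using this

lemma Len_zero : Len 0 = 0 := by simpa using Len_nat 0

lemma Len_pos {q : ℚ} (h : 0 < q) : 1 ≤ Len q := by
  have h1 : q.num.natAbs ≠ 0 := by
    have := Rat.num_pos.mpr h; omega
  exact lenAux_pos h1 q.den_nz

lemma Len_inv {q : ℚ} (h : 0 < q) : Len (1 / q) = Len q := by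
  have hnum : 0 < q.num := Rat.num_pos.mpr h
  have hna : ((q.num.natAbs : ℕ) : ℚ) = (q.num : ℚ) := by
    rw [Nat.cast_natAbs, abs_of_nonneg hnum.le]
  have hd : (q.den : ℚ) ≠ 0 := by exact_mod_cast q.den_nz
  have hn : (q.num : ℚ) ≠ 0 := by exact_mod_cast hnum.ne'
  have h1 : (1 : ℚ) / q = (q.den : ℚ) / ((q.num.natAbs : ℕ) : ℚ) := by
    rw [hna]
    conv_lhs => rw [← Rat.num_div_den q]
    field_simp
  rw [h1, Len_div q.den q.num.natAbs (by omega), lenAux_symm]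
  rfl

lemma Len_add_one {q : ℚ} (h : 0 ≤ q) : Len (q + 1) = Len q + 1 := by
  have hnum : 0 ≤ q.num := Rat.num_nonneg.mpr h
  have hna : ((q.num.natAbs : ℕ) : ℚ) = (q.num : ℚ) := by
    rw [Nat.cast_natAbs, abs_of_nonneg hnum]
  have hd : (q.den : ℚ) ≠ 0 := by exact_mod_cast q.den_nz
  have h2 : (q.num : ℚ) = q * q.den := (div_eq_iff hd).mp (Rat.num_div_den q)
  have h1 : q + 1 = ((q.num.natAbs + q.den : ℕ) : ℚ) / ((q.den : ℕ) : ℚ) := by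
    rw [eq_div_iff hd]
    push_cast [hna]
    linear_combination -h2
  rw [h1, Len_div _ _ q.den_nz]
  rw [lenAux_eq, if_neg (by have := q.den_nz; omega), if_pos (by omega)]
  have h3 : q.num.natAbs + q.den - q.den = q.num.natAbs := by omega
  rw [h3]
  rfl

lemma Len_add_nat {q : ℚ} (h : 0 ≤ q) (a : ℕ) : Len (q + a) = Len q + a := by
  induction a with
  | zero => simp
  | succ b ih =>
    have h2 : q + ((b : ℕ) + 1 : ℕ) = (q + b) + 1 := by push_cast; ring
    rw [h2, Len_add_one (by positivity), ih]
    omega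

lemma one_le_cfVal_s9 : ∀ M : List ℕ, M ≠ [] → (∀ x ∈ M, 1 ≤ x) → 1 ≤ cfVal M
  | [a], _, h => by
    have : 1 ≤ a := h a (by simp)
    simp only [cfVal]
    exact_mod_cast this
  | a :: b :: r, _, h => by
    have hc : 1 ≤ cfVal (b :: r) :=
      one_le_cfVal_s9 (b :: r) (by simp) (fun x hx => h x (List.mem_cons_of_mem a hx))
    have hpos : (0 : ℚ) < 1 / cfVal (b :: r) := by positivity
    have ha : (1 : ℚ) ≤ a := by exact_mod_cast h a (by simp)
    show (1 : ℚ) ≤ (a : ℚ) + 1 / cfVal (b :: r)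
    linarith

lemma cfVal_pos {M : List ℕ} (h1 : M ≠ []) (h2 : ∀ x ∈ M, 1 ≤ x) : 0 < cfVal M :=
  lt_of_lt_of_le one_pos (one_le_cfVal_s9 M h1 h2)

lemma sum_eq_len : ∀ L : List ℕ, ∀ q : ℚ, IsExpansion L q → L.sum = Len q
  | [a], q, ⟨_, _, hval⟩ => by
    have : (a : ℚ) = q := hval
    rw [List.sum_cons, List.sum_nil, ← this, Len_nat]
    omega
  | a :: b :: r, q, ⟨_, htail, hval⟩ => by
    have htail' : ∀ x ∈ b :: r, 1 ≤ x := htail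
    have hc1 : 1 ≤ cfVal (b :: r) := one_le_cfVal_s9 _ (by simp) htail'
    have hc0 : 0 < cfVal (b :: r) := lt_of_lt_of_le one_pos hc1
    have ih : (b :: r).sum = Len (cfVal (b :: r)) :=
      sum_eq_len (b :: r) (cfVal (b :: r))
        ⟨by simp, fun x hx => htail' x (List.mem_of_mem_tail hx), rfl⟩
    have hq : q = 1 / cfVal (b :: r) + (a : ℕ) := by
      rw [← hval]; show (a : ℚ) + 1 / cfVal (b :: r) = _; ring
    have hrec : (0 : ℚ) ≤ 1 / cfVal (b :: r) := by positivity
    rw [List.sum_cons, hq, Len_add_nat hrec a, Len_inv hc0, ← ih]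
    omega

lemma cfVal_nonneg {L : List ℕ} (h : ∀ x ∈ L.tail, 1 ≤ x) : 0 ≤ cfVal L := by
  match L with
  | [] => simp [cfVal]
  | [a] => simp [cfVal]
  | a :: b :: r =>
    have hc : 0 < cfVal (b :: r) := cfVal_pos (by simp) h
    have : (0:ℚ) ≤ (a:ℚ) := by positivity
    show (0:ℚ) ≤ (a : ℚ) + 1 / cfVal (b :: r)
    positivity

lemma hasLen_nonneg {q : ℚ} {k : ℕ} (h : HasLen q k) : 0 ≤ q := by
  obtain ⟨L, ⟨_, ht, hv⟩, _⟩ := h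
  rw [← hv]; exact cfVal_nonneg ht

lemma hasLen_len {q : ℚ} {k : ℕ} (h : HasLen q k) : Len q = k := by
  obtain ⟨L, hL, hs⟩ := h
  rw [← hs, sum_eq_len L q hL]

/-- bump an expansion by one -/
lemma bump {x : ℚ} {L : List ℕ} (hexp : IsExpansion L x)
    (hhead : x < 1 → ∃ T, L = 0 :: T) (hall : 1 ≤ x → ∀ y ∈ L, 1 ≤ y) :
    ∃ M : List ℕ, IsExpansion M (x + 1) ∧ M.sum = L.sum + 1 ∧ ∀ y ∈ M, 1 ≤ y := by
  obtain ⟨hne, htail, hval⟩ := hexp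
  rcases lt_or_ge x 1 with h1 | h1
  · obtain ⟨T, rfl⟩ := hhead h1
    refine ⟨1 :: T, ⟨by simp, htail, ?_⟩, by rw [List.sum_cons, List.sum_cons]; omega, ?_⟩
    · have := cfVal_succ_head 0 T
      simpa [hval] using this
    · intro y hy
      rcases List.mem_cons.mp hy with rfl | hy
      · exact le_refl 1
      · exact htail y hy
  · have hall' := hall h1
    match L, hne with
    | a :: T, _ =>
      refine ⟨(a + 1) :: T, ⟨by simp, htail, ?_⟩, by simp [List.sum_cons]; omega, ?_⟩
      · rw [cfVal_succ_head, hval]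
      · intro y hy
        rcases List.mem_cons.mp hy with rfl | hy
        · omega
        · exact hall' y (List.mem_cons_of_mem a hy)

lemma exists_expansion : ∀ n : ℕ, ∀ q : ℚ, 0 < q → Len q = n →
    ∃ L : List ℕ, IsExpansion L q ∧ L.sum = n ∧
      (q < 1 → ∃ T, L = 0 :: T) ∧ (1 ≤ q → ∀ y ∈ L, 1 ≤ y) := by
  intro n
  induction n using Nat.strong_induction_on with
  | _ n ih =>
    intro q hq hlen
    have hn1 : 1 ≤ n := hlen ▸ Len_pos hq
    rcases lt_trichotomy q 1 with h1 | h1 | h1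
    · -- 0 < q < 1
      set r : ℚ := 1 / q with hr
      have hrq : 1 < r := by rw [hr]; exact one_lt_one_div hq h1
      have hlr : Len r = n := by rw [hr, Len_inv hq, hlen]
      have hx : (0:ℚ) < r - 1 := by linarith
      have hlx : Len (r - 1) = n - 1 := by
        have := Len_add_one (le_of_lt hx)
        rw [show r - 1 + 1 = r by ring, hlr] at this
        omega
      obtain ⟨L', hexp', hsum', hhead', hall'⟩ := ih (n - 1) (by omega) (r - 1) hx hlx
      obtain ⟨M, hexpM, hsumM, hallM⟩ := bump hexp' hhead' hall'
      rw [show r - 1 + 1 = r by ring] at hexpM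
      refine ⟨0 :: M, ⟨by simp, ?_, ?_⟩, ?_, fun _ => ⟨M, rfl⟩, fun h => absurd h (by linarith)⟩
      · intro y hy; exact hallM y hy
      · obtain ⟨hMne, _, hMval⟩ := hexpM
        have hMv : cfVal M = r := hMval
        match M, hMne with
        | b :: T, _ =>
          show (0:ℚ) + 1 / cfVal (b :: T) = q
          rw [hMv, hr]
          rw [one_div_one_div]
          ring
      · simp [List.sum_cons, hsumM, hsum']; omega
    · -- q = 1
      subst h1
      have hLen1 : Len (1 : ℚ) = 1 := by simpa using Len_nat 1
      have hn : n = 1 := by omega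
      subst hn
      refine ⟨[1], ⟨by simp, by simp, by simp [cfVal]⟩, by simp, ?_, ?_⟩
      · intro h; linarith
      · intro _ y hy; simp at hy; omega
    · -- q > 1
      have hx : (0:ℚ) < q - 1 := by linarith
      have hlx : Len (q - 1) = n - 1 := by
        have := Len_add_one (le_of_lt hx)
        rw [show q - 1 + 1 = q by ring, hlen] at this
        omega
      obtain ⟨L', hexp', hsum', hhead', hall'⟩ := ih (n - 1) (by omega) (q - 1) hx hlx
      obtain ⟨M, hexpM, hsumM, hallM⟩ := bump hexp' hhead' hall'
      rw [show q - 1 + 1 = q by ring] at hexpM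
      exact ⟨M, hexpM, by omega, fun h => absurd h (by linarith), fun _ => hallM⟩

lemma hasLen_of_pos {q : ℚ} (hq : 0 < q) : HasLen q (Len q) := by
  obtain ⟨L, hexp, hsum, _, _⟩ := exists_expansion (Len q) q hq rfl
  exact ⟨L, hexp, hsum⟩

lemma hasLen_zero : HasLen 0 0 :=
  ⟨[0], ⟨by simp, by simp, by simp [cfVal]⟩, by simp⟩




/-- Explicit increasing enumeration of `S_m`. -/
def E : ℕ → ℕ → ℚ
  | 0, _ => 0
  | m + 1, i =>
    if i = 0 then 0
    else if i ≤ 2 ^ m then 1 / (E m (2 ^ m - i) + 1) else E m (i - 2 ^ m) + 1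

lemma E_zero (m : ℕ) : E m 0 = 0 := by cases m <;> simp [E]

lemma E_nonneg (m : ℕ) : ∀ i, 0 ≤ E m i := by
  induction m with
  | zero => intro i; simp [E]
  | succ m ih =>
    intro i
    simp only [E]
    split_ifs with h1 h2
    · exact le_refl _
    · have := ih (2 ^ m - i); positivity
    · have := ih (i - 2 ^ m); positivity

lemma E_pos (m : ℕ) (i : ℕ) (h : i ≠ 0) : m ≠ 0 → 0 < E m i := by
  intro hm
  match m with
  | m + 1 =>
    simp only [E, if_neg h]
    split_ifs with h2
    · have := E_nonneg m (2 ^ m - i); positivity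
    · have := E_nonneg m (i - 2 ^ m); positivity

lemma E_strictMono (m : ℕ) : ∀ i j, i < j → j < 2 ^ m → E m i < E m j := by
  induction m with
  | zero => intro i j hij hj; omega
  | succ m ih =>
    intro i j hij hj
    have hEj_pos : 0 < E (m + 1) j := E_pos (m + 1) j (by omega) (by omega)
    rcases Nat.eq_zero_or_pos i with rfl | hi
    · rw [E_zero]; exact hEj_pos
    by_cases hi2 : i ≤ 2 ^ m
    · by_cases hj2 : j ≤ 2 ^ m
      · -- both in reciprocal zone
        have ha : 2 ^ m - j < 2 ^ m - i := by omega
        have hb : 2 ^ m - i < 2 ^ m := by omega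
        have hE : E m (2 ^ m - j) < E m (2 ^ m - i) := ih _ _ ha hb
        have h0 : 0 < E m (2 ^ m - j) + 1 := by have := E_nonneg m (2 ^ m - j); linarith
        simp only [E, if_neg (by omega : ¬ i = 0), if_neg (by omega : ¬ j = 0),
          if_pos hi2, if_pos hj2]
        exact one_div_lt_one_div_of_lt h0 (by linarith)
      · -- i reciprocal, j upper
        have hle1 : E (m + 1) i ≤ 1 := by
          simp only [E, if_neg (by omega : ¬ i = 0), if_pos hi2]
          have h0 := E_nonneg m (2 ^ m - i)
          rw [div_le_one (by linarith)]
          linarith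
        have hgt1 : 1 < E (m + 1) j := by
          simp only [E, if_neg (by omega : ¬ j = 0), if_neg hj2]
          have : 0 < E m (j - 2 ^ m) := E_pos m (j - 2 ^ m) (by omega)
            (by
              intro h0
              subst h0
              simp at hj
              omega)
          linarith
        linarith
    · -- both upper
      have hj2 : ¬ j ≤ 2 ^ m := by omega
      simp only [E, if_neg (by omega : ¬ i = 0), if_neg (by omega : ¬ j = 0),
        if_neg hi2, if_neg hj2]
      have : E m (i - 2 ^ m) < E m (j - 2 ^ m) := by
        apply ih <;> omega
      linarith

lemma E_len (m : ℕ) : ∀ i, i ≠ 0 → i < 2 ^ m →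
    1 ≤ Len (E m i) ∧ Len (E m i) ≤ m ∧ (Len (E m i) = m ↔ Odd i) := by
  induction m with
  | zero => intro i h hi; omega
  | succ m ih =>
    intro i hi0 hilt
    by_cases hi2 : i ≤ 2 ^ m
    · -- reciprocal zone
      obtain ⟨j, hij⟩ : ∃ j, i + j = 2 ^ m := ⟨2 ^ m - i, by omega⟩
      have hj : 2 ^ m - i = j := by omega
      have hjlt : j < 2 ^ m := by omega
      have hx0 : 0 ≤ E m j := E_nonneg m j
      have hE : E (m + 1) i = 1 / (E m j + 1) := by
        simp only [E, if_neg hi0, if_pos hi2, hj]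
      have hLen : Len (E (m + 1) i) = Len (E m j) + 1 := by
        rw [hE, Len_inv (by linarith), Len_add_one hx0]
      by_cases hj0 : j = 0
      · -- i = 2^m
        have hi : i = 2 ^ m := by omega
        have hL0 : Len (E m j) = 0 := by rw [hj0, E_zero, Len_zero]
        rw [hLen, hL0]
        refine ⟨by omega, by omega, ?_⟩
        constructor
        · intro h
          have hm : m = 0 := by omega
          subst hm
          rw [hi]; exact odd_one
        · intro hodd
          rw [hi] at hodd
          rcases Nat.eq_zero_or_pos m with rfl | hm
          · rfl
          · exfalso
            have : Even (2 ^ m) := (Nat.even_pow).mpr ⟨even_two, by omega⟩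
            exact (Nat.not_even_iff_odd.mpr hodd) this
      · obtain ⟨h1, h2, h3⟩ := ih j hj0 hjlt
        rw [hLen]
        refine ⟨by omega, by omega, ?_⟩
        have hm1 : 1 ≤ m := by
          by_contra hc
          interval_cases m
          omega
        have hpar : Odd i ↔ Odd j := by
          have hev : 2 ^ m % 2 = 0 :=
            Nat.even_iff.mp ((Nat.even_pow).mpr ⟨even_two, by omega⟩)
          rw [Nat.odd_iff, Nat.odd_iff]
          omega
        rw [hpar, ← h3]
        omega
    · -- upper zone
      obtain ⟨j, hij⟩ : ∃ j, i = 2 ^ m + j := ⟨i - 2 ^ m, by omega⟩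
      have hj : i - 2 ^ m = j := by omega
      have hj0 : j ≠ 0 := by omega
      have hjlt : j < 2 ^ m := by omega
      have hm1 : 1 ≤ m := by
        rcases Nat.eq_zero_or_pos m with rfl | hm
        · omega
        · exact hm
      have hE : E (m + 1) i = E m j + 1 := by
        simp only [E, if_neg hi0, if_neg hi2, hj]
      have hLen : Len (E (m + 1) i) = Len (E m j) + 1 := by
        rw [hE, Len_add_one (E_nonneg m j)]
      obtain ⟨h1, h2, h3⟩ := ih j hj0 hjlt
      rw [hLen]
      refine ⟨by omega, by omega, ?_⟩
      have hpar : Odd i ↔ Odd j := by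
        have hev : 2 ^ m % 2 = 0 :=
          Nat.even_iff.mp ((Nat.even_pow).mpr ⟨even_two, by omega⟩)
        rw [Nat.odd_iff, Nat.odd_iff]
        omega
      rw [hpar, ← h3]
      omega

lemma E_surj (m : ℕ) : ∀ q : ℚ, 0 ≤ q → Len q ≤ m → ∃ i, i < 2 ^ m ∧ E m i = q := by
  induction m with
  | zero =>
    intro q h0 hl
    have hq : q = 0 := by
      by_contra hne
      have : 0 < q := lt_of_le_of_ne h0 (Ne.symm hne)
      have := Len_pos this
      omega
    exact ⟨0, by omega, by simp [E, hq]⟩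
  | succ m ih =>
    intro q h0 hl
    rcases eq_or_lt_of_le h0 with heq | hq
    · exact ⟨0, by positivity, by rw [E_zero, heq]⟩
    by_cases h1 : q ≤ 1
    · -- 0 < q ≤ 1
      set r : ℚ := 1 / q with hr
      have hr1 : 1 ≤ r := by rw [hr]; rw [le_div_iff₀ hq]; linarith
      have hlr : Len r = Len q := by rw [hr]; exact Len_inv hq
      have hx : (0:ℚ) ≤ r - 1 := by linarith
      have hlq : 1 ≤ Len q := Len_pos hq
      have hlx : Len (r - 1) = Len q - 1 := by
        have := Len_add_one hx
        rw [show r - 1 + 1 = r by ring, hlr] at this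
        omega
      obtain ⟨j, hjlt, hjE⟩ := ih (r - 1) hx (by omega)
      refine ⟨2 ^ m - j, by omega, ?_⟩
      have h2 : 2 ^ m - (2 ^ m - j) = j := by omega
      simp only [E, if_neg (by omega : ¬ 2 ^ m - j = 0), if_pos (by omega : 2 ^ m - j ≤ 2 ^ m), h2, hjE]
      rw [show r - 1 + 1 = r by ring, hr, one_div_one_div]
    · -- q > 1
      push_neg at h1
      have hx : (0:ℚ) < q - 1 := by linarith
      have hlq : 1 ≤ Len q := Len_pos hq
      have hlx : Len (q - 1) = Len q - 1 := by
        have := Len_add_one hx.le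
        rw [show q - 1 + 1 = q by ring] at this
        omega
      obtain ⟨j, hjlt, hjE⟩ := ih (q - 1) hx.le (by omega)
      have hj0 : j ≠ 0 := by
        rintro rfl
        rw [E_zero] at hjE
        linarith
      refine ⟨2 ^ m + j, by omega, ?_⟩
      have h2 : 2 ^ m + j - 2 ^ m = j := by omega
      simp only [E, if_neg (by omega : ¬ 2 ^ m + j = 0), if_neg (by omega : ¬ 2 ^ m + j ≤ 2 ^ m), h2, hjE]
      ring

/-- For every integer `m ≥ 1`, let `S_m = {0} ∪ {α ∈ ℚ_{>0} : |α| ≤ m}`.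
Then `S_m` has exactly `2^m` elements, and if `α₀ < α₁ < ⋯ < α_{2^m − 1}` is its increasing
enumeration, then `|αᵢ| = m` if and only if `i` is odd (and `|αᵢ| < m` if `i` is even). -/
theorem increasing_enumeration (m : ℕ) (hm : 1 ≤ m) :
    (({0} : Set ℚ) ∪ {α : ℚ | 0 < α ∧ ∃ a ≤ m, HasLen α a}).ncard = 2 ^ m ∧
    ∀ e : Fin (2 ^ m) → ℚ, StrictMono e →
      Set.range e = (({0} : Set ℚ) ∪ {α : ℚ | 0 < α ∧ ∃ a ≤ m, HasLen α a}) →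
      ∀ i : Fin (2 ^ m),
        (HasLen (e i) m ↔ Odd (i : ℕ)) ∧
        (Even (i : ℕ) → ∃ a, HasLen (e i) a ∧ a < m) := by
  have h2m : 0 < 2 ^ m := by positivity
  have hmne : m ≠ 0 := by omega
  set f : Fin (2 ^ m) → ℚ := fun i => E m (i : ℕ) with hfdef
  have hf : StrictMono f := fun i j hij => E_strictMono m i j hij j.isLt
  have hrange : Set.range f =
      (({0} : Set ℚ) ∪ {α : ℚ | 0 < α ∧ ∃ a ≤ m, HasLen α a}) := by
    ext q
    constructor
    · rintro ⟨i, rfl⟩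
      by_cases hi : (i : ℕ) = 0
      · left
        show f i ∈ ({0} : Set ℚ)
        simp [hfdef, hi, E_zero]
      · right
        have hpos : 0 < E m (i : ℕ) := E_pos m (i : ℕ) hi hmne
        exact ⟨hpos, Len (E m (i : ℕ)), (E_len m (i : ℕ) hi i.isLt).2.1,
          hasLen_of_pos hpos⟩
    · intro hq
      rcases hq with h0 | ⟨hpos, a, ham, hlen⟩
      · have hq0 : q = 0 := h0
        exact ⟨⟨0, h2m⟩, by simp [hfdef, E_zero, hq0]⟩
      · have hLa : Len q = a := hasLen_len hlen
        obtain ⟨i, hilt, hiE⟩ := E_surj m q hpos.le (by omega)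
        exact ⟨⟨i, hilt⟩, hiE⟩
  constructor
  · rw [← hrange, ← Nat.card_coe_set_eq,
      Nat.card_range_of_injective hf.injective, Nat.card_eq_fintype_card,
      Fintype.card_fin]
  · intro e he hrange_e
    have hef : e = f := by
      haveI : WellFoundedLT (Fin (2 ^ m)) := inferInstance
      exact Set.range_injOn_strictMono he hf (hrange_e.trans hrange.symm)
    intro i
    by_cases hi : (i : ℕ) = 0
    · have hval : e i = 0 := by rw [hef]; simp [hfdef, hi, E_zero]
      constructor
      · constructor
        · intro h
          exfalso
          have h1 := hasLen_len h
          rw [hval, Len_zero] at h1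
          omega
        · intro hodd
          exfalso
          rw [hi] at hodd
          have := Nat.odd_iff.mp hodd
          omega
      · intro _
        exact ⟨0, by rw [hval]; exact hasLen_zero, by omega⟩
    · have hpos : 0 < E m (i : ℕ) := E_pos m (i : ℕ) hi hmne
      obtain ⟨hL1, hL2, hL3⟩ := E_len m (i : ℕ) hi i.isLt
      have hei : e i = E m (i : ℕ) := by rw [hef]
      constructor
      · rw [hei]
        constructor
        · intro h
          exact hL3.mp (hasLen_len h)
        · intro hodd
          have hLm : Len (E m (i : ℕ)) = m := hL3.mpr hodd
          have hh := hasLen_of_pos hpos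
          rwa [hLm] at hh
      · intro heven
        refine ⟨Len (E m (i : ℕ)), by rw [hei]; exact hasLen_of_pos hpos, ?_⟩
        have hnotodd : ¬ Odd (i : ℕ) := by
          rw [Nat.odd_iff]
          have := Nat.even_iff.mp heven
          omega
        have hne : Len (E m (i : ℕ)) ≠ m := fun hh => hnotodd (hL3.mp hh)
        omega

end ResolutionGraph
end
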